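/- arXiv:2111.14222 — 3 statements merged into one kernel-verified Lean document; each statement's English description precedes it below -/
import Mathlib

section
/- Let H be a complex Hilbert space, let A be a Hilbert–Schmidt operator on H, and let 0 < ν < 1. Then w_{(2,ν)}(A) = √(2ν² - 2ν + 1) ‖A‖₂ if and only if tr(A²) = 0. -/
variable {H : Type*} [NormedAddCommGroup H] [InnerProductSpace ℂ H] [CompleteSpace H]

/-- The operator `ν e^{iθ} A + (1-ν) e^{-iθ} A*`. -/
noncomputable def weightedPart {E : Type*} [NormedAddCommGroup E] [InnerProductSpace ℂ E]
    [CompleteSpace E] (ν θ : ℝ) (A : E →L[ℂ] E) : E →L[ℂ] E :=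
  ((ν : ℂ) * Complex.exp (θ * Complex.I)) • A +
    (((1 - ν : ℝ) : ℂ) * Complex.exp (-(θ * Complex.I))) • ContinuousLinearMap.adjoint A

/-- The Hilbert–Schmidt norm `‖A‖₂ = √(∑ᵢ ‖A eᵢ‖²)` computed w.r.t. a Hilbert basis `e`. -/
noncomputable def hsNorm {E : Type*} [NormedAddCommGroup E] [InnerProductSpace ℂ E]
    {ι : Type*} (e : HilbertBasis ι ℂ E) (A : E →L[ℂ] E) : ℝ :=
  Real.sqrt (∑' i, ‖A (e i)‖ ^ 2)

/-- The trace `tr(T) = ∑ᵢ ⟨eᵢ, T eᵢ⟩` computed w.r.t. a Hilbert basis `e`. -/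
noncomputable def trBasis {E : Type*} [NormedAddCommGroup E] [InnerProductSpace ℂ E]
    {ι : Type*} (e : HilbertBasis ι ℂ E) (T : E →L[ℂ] E) : ℂ :=
  ∑' i, (inner ℂ (e i) (T (e i)) : ℂ)

/-- The weighted Hilbert–Schmidt numerical radius
`w_{(2,ν)}(A) = sup_{θ ∈ ℝ} ‖ν e^{iθ} A + (1-ν) e^{-iθ} A*‖₂`. -/
noncomputable def wHS {E : Type*} [NormedAddCommGroup E] [InnerProductSpace ℂ E]
    [CompleteSpace E] {ι : Type*} (e : HilbertBasis ι ℂ E) (ν : ℝ) (A : E →L[ℂ] E) : ℝ :=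
  ⨆ θ : ℝ, hsNorm e (weightedPart ν θ A)

/-- The block operator `[[X, Y],[Z, W]]` on the Hilbert space direct sum `H ⊕₂ H`,
mapping `(x, y)` to `(Xx + Yy, Zx + Wy)`. -/
noncomputable def blockOp (X Y Z W : H →L[ℂ] H) :
    WithLp 2 (H × H) →L[ℂ] WithLp 2 (H × H) :=
  ((WithLp.prodContinuousLinearEquiv 2 ℂ H H).symm.toContinuousLinearMap).comp
    ((((X.comp (ContinuousLinearMap.fst ℂ H H)) + (Y.comp (ContinuousLinearMap.snd ℂ H H))).prod
      ((Z.comp (ContinuousLinearMap.fst ℂ H H)) + (W.comp (ContinuousLinearMap.snd ℂ H H)))).comp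
      (WithLp.prodContinuousLinearEquiv 2 ℂ H H).toContinuousLinearMap)

/-! Expanding the square pointwise, `‖ν e^{iθ} A x + (1-ν) e^{-iθ} A* x‖²` equals
`ν² ‖A x‖² + (1-ν)² ‖A* x‖² + 2ν(1-ν) Re (e^{2iθ} ⟪x, A² x⟫)`.
Summing over the basis and using `‖A*‖₂ = ‖A‖₂`,
`‖ν e^{iθ} A + (1-ν) e^{-iθ} A*‖₂² = (ν² + (1-ν)²) ‖A‖₂² + 2ν(1-ν) Re (e^{2iθ} tr A²)`.
The supremum over `θ` is attained when `e^{2iθ}` rotates `tr A²` onto the positive real axis, so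
`w_{(2,ν)}(A)² = (2ν² - 2ν + 1) ‖A‖₂² + 2ν(1-ν) |tr A²|`, and `ν(1-ν) > 0` does the rest. -/

open ComplexConjugate

theorem Monotone.ciSup_comp_re_exp_mul_I_mul {f : ℝ → ℝ} (hf : Monotone f) (z : ℂ) :
    ⨆ θ : ℝ, f (Complex.exp (θ * Complex.I) * z).re = f ‖z‖ := by
  refine ciSup_eq_of_forall_le_of_forall_lt_exists_gt (fun θ => hf ?_)
    fun w hw => ⟨-z.arg, ?_⟩
  · calc (Complex.exp (θ * Complex.I) * z).re ≤ ‖Complex.exp (θ * Complex.I) * z‖ :=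
          Complex.re_le_norm _
      _ = ‖z‖ := by rw [norm_mul, Complex.norm_exp_ofReal_mul_I, one_mul]
  · have hrot : Complex.exp (↑(-z.arg) * Complex.I) * z = ‖z‖ := by
      nth_rewrite 2 [← Complex.norm_mul_exp_arg_mul_I z]
      rw [mul_left_comm, ← Complex.exp_add, Complex.ofReal_neg, neg_mul, neg_add_cancel,
        Complex.exp_zero, mul_one]
    rwa [hrot, Complex.ofReal_re]

section

variable {𝕜 E ι : Type*} [RCLike 𝕜] [NormedAddCommGroup E] [InnerProductSpace 𝕜 E]

namespace HilbertBasis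

theorem hasSum_norm_inner_sq (b : HilbertBasis ι 𝕜 E) (x : E) :
    HasSum (fun i => ‖(inner 𝕜 (b i) x : 𝕜)‖ ^ 2) (‖x‖ ^ 2) := by
  simpa only [ENNReal.toReal_ofNat, Real.rpow_two, b.repr_apply_apply,
    LinearIsometryEquiv.norm_map] using lp.hasSum_norm (p := 2) (by norm_num) (b.repr x)

theorem tsum_enorm_inner_sq (b : HilbertBasis ι 𝕜 E) (x : E) :
    ∑' i, ‖(inner 𝕜 (b i) x : 𝕜)‖ₑ ^ 2 = ‖x‖ₑ ^ 2 := by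
  simp only [← ofReal_norm, ← ENNReal.ofReal_pow (norm_nonneg _)]
  rw [← ENNReal.ofReal_tsum_of_nonneg (fun _ => by positivity)
    (b.hasSum_norm_inner_sq x).summable, (b.hasSum_norm_inner_sq x).tsum_eq]

end HilbertBasis

variable [CompleteSpace E]

theorem norm_smul_add_smul_adjoint_apply_sq (a c : 𝕜) (A : E →L[𝕜] E) (x : E) :
    ‖a • A x + c • A.adjoint x‖ ^ 2 =
      ‖a‖ ^ 2 * ‖A x‖ ^ 2 + ‖c‖ ^ 2 * ‖A.adjoint x‖ ^ 2
        + 2 * RCLike.re (a * conj c * inner 𝕜 x (A (A x))) := by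
  have hcross : RCLike.re (inner 𝕜 (a • A x) (c • A.adjoint x)) =
      RCLike.re (a * conj c * inner 𝕜 x (A (A x))) := by
    rw [inner_smul_left, inner_smul_right, A.adjoint_inner_right, ← inner_conj_symm (A (A x)),
      ← RCLike.conj_re (a * conj c * _)]
    simp only [map_mul, RCLike.conj_conj]
    ring_nf
  rw [norm_add_sq (𝕜 := 𝕜), hcross, norm_smul, norm_smul]
  ring

namespace HilbertBasis

/- In `ℝ≥0∞` the double series `∑ᵢ ∑ⱼ |⟪bⱼ, A bᵢ⟫|²` can be swapped without any summability
hypothesis. -/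
theorem tsum_enorm_adjoint_apply_sq (b : HilbertBasis ι 𝕜 E) (A : E →L[𝕜] E) :
    ∑' i, ‖A.adjoint (b i)‖ₑ ^ 2 = ∑' i, ‖A (b i)‖ₑ ^ 2 := by
  simp only [← b.tsum_enorm_inner_sq]
  rw [ENNReal.tsum_comm]
  refine tsum_congr fun i => tsum_congr fun j => ?_
  rw [ContinuousLinearMap.adjoint_inner_right, ← inner_conj_symm, RCLike.enorm_conj]

theorem hasSum_norm_adjoint_apply_sq (b : HilbertBasis ι 𝕜 E) {A : E →L[𝕜] E}
    (hA : Summable fun i => ‖A (b i)‖ ^ 2) :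
    HasSum (fun i => ‖A.adjoint (b i)‖ ^ 2) (∑' i, ‖A (b i)‖ ^ 2) := by
  have h := b.tsum_enorm_adjoint_apply_sq A
  simp only [← ofReal_norm, ← ENNReal.ofReal_pow (norm_nonneg _)] at h
  have hs : Summable fun i => ‖A.adjoint (b i)‖ ^ 2 :=
    (ENNReal.summable_toReal (h ▸ hA.tsum_ofReal_ne_top)).congr fun i =>
      ENNReal.toReal_ofReal (sq_nonneg _)
  rw [← ENNReal.ofReal_tsum_of_nonneg (fun _ => by positivity) hA,
    ← ENNReal.ofReal_tsum_of_nonneg (fun _ => by positivity) hs,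
    ENNReal.ofReal_eq_ofReal_iff (tsum_nonneg fun _ => by positivity)
      (tsum_nonneg fun _ => by positivity)] at h
  exact h ▸ hs.hasSum

theorem summable_inner_apply_apply (b : HilbertBasis ι 𝕜 E) {A : E →L[𝕜] E}
    (hA : Summable fun i => ‖A (b i)‖ ^ 2) :
    Summable fun i => (inner 𝕜 (b i) (A (A (b i))) : 𝕜) := by
  refine Summable.of_norm_bounded
    ((hA.add (b.hasSum_norm_adjoint_apply_sq hA).summable).div_const 2) fun i => ?_
  rw [← A.adjoint_inner_left]
  have := norm_inner_le_norm (𝕜 := 𝕜) (A.adjoint (b i)) (A (b i))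
  nlinarith [sq_nonneg (‖A (b i)‖ - ‖A.adjoint (b i)‖)]

theorem hasSum_norm_smul_add_smul_adjoint_apply_sq (b : HilbertBasis ι 𝕜 E) (a c : 𝕜)
    {A : E →L[𝕜] E} (hA : Summable fun i => ‖A (b i)‖ ^ 2) :
    HasSum (fun i => ‖a • A (b i) + c • A.adjoint (b i)‖ ^ 2)
      ((‖a‖ ^ 2 + ‖c‖ ^ 2) * ∑' i, ‖A (b i)‖ ^ 2
        + 2 * RCLike.re (a * conj c * ∑' i, inner 𝕜 (b i) (A (A (b i))))) := by
  have hre := ((b.summable_inner_apply_apply hA).hasSum.mul_left (a * conj c)).mapL RCLike.reCLM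
  have h := ((hA.hasSum.mul_left (‖a‖ ^ 2)).add
    ((b.hasSum_norm_adjoint_apply_sq hA).mul_left (‖c‖ ^ 2))).add (hre.mul_left 2)
  simp only [RCLike.reCLM_apply, ← norm_smul_add_smul_adjoint_apply_sq] at h
  rwa [add_mul]

end HilbertBasis

end

theorem hsNorm_nonneg {E ι : Type*} [NormedAddCommGroup E] [InnerProductSpace ℂ E]
    (e : HilbertBasis ι ℂ E) (A : E →L[ℂ] E) : 0 ≤ hsNorm e A :=
  Real.sqrt_nonneg _

theorem hsNorm_weightedPart_sq {ι : Type*} (e : HilbertBasis ι ℂ H) {A : H →L[ℂ] H}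
    (hA : Summable fun i => ‖A (e i)‖ ^ 2) {ν : ℝ} (hν₀ : 0 ≤ ν) (hν₁ : ν ≤ 1) (θ : ℝ) :
    hsNorm e (weightedPart ν θ A) ^ 2 = (ν ^ 2 + (1 - ν) ^ 2) * hsNorm e A ^ 2
      + 2 * ν * (1 - ν) * (Complex.exp (↑(2 * θ) * Complex.I) * trBasis e (A.comp A)).re := by
  have ha : ‖(ν : ℂ) * Complex.exp (θ * Complex.I)‖ = ν := by
    rw [norm_mul, Complex.norm_exp_ofReal_mul_I, mul_one, Complex.norm_real,
      Real.norm_of_nonneg hν₀]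
  have hc : ‖((1 - ν : ℝ) : ℂ) * Complex.exp (-(θ * Complex.I))‖ = 1 - ν := by
    rw [norm_mul, ← neg_mul, ← Complex.ofReal_neg, Complex.norm_exp_ofReal_mul_I, mul_one,
      Complex.norm_real, Real.norm_of_nonneg (sub_nonneg.2 hν₁)]
  have hac : (ν : ℂ) * Complex.exp (θ * Complex.I) *
      conj (((1 - ν : ℝ) : ℂ) * Complex.exp (-(θ * Complex.I))) =
      ((ν * (1 - ν) : ℝ) : ℂ) * Complex.exp (↑(2 * θ) * Complex.I) := by
    rw [map_mul, Complex.conj_ofReal, ← Complex.exp_conj, map_neg, map_mul, Complex.conj_ofReal,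
      Complex.conj_I, mul_mul_mul_comm, ← Complex.exp_add]
    push_cast
    ring_nf
  have htr : trBasis e (A.comp A) = ∑' i, inner ℂ (e i) (A (A (e i))) := rfl
  have h := (e.hasSum_norm_smul_add_smul_adjoint_apply_sq ((ν : ℂ) * Complex.exp (θ * Complex.I))
    (((1 - ν : ℝ) : ℂ) * Complex.exp (-(θ * Complex.I))) hA).tsum_eq
  rw [ha, hc, hac, mul_assoc, RCLike.re_to_complex, Complex.re_ofReal_mul] at h
  rw [hsNorm, hsNorm, Real.sq_sqrt (tsum_nonneg fun _ => by positivity),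
    Real.sq_sqrt (tsum_nonneg fun _ => by positivity), htr]
  exact h.trans (by ring)

theorem wHS_eq_sqrt {ι : Type*} (e : HilbertBasis ι ℂ H) {A : H →L[ℂ] H}
    (hA : Summable fun i => ‖A (e i)‖ ^ 2) {ν : ℝ} (hν₀ : 0 ≤ ν) (hν₁ : ν ≤ 1) :
    wHS e ν A = √((ν ^ 2 + (1 - ν) ^ 2) * hsNorm e A ^ 2
      + 2 * ν * (1 - ν) * ‖trBasis e (A.comp A)‖) := by
  set t := trBasis e (A.comp A)
  let g : ℝ → ℝ := fun r => √((ν ^ 2 + (1 - ν) ^ 2) * hsNorm e A ^ 2 + 2 * ν * (1 - ν) * r)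
  have hg : Monotone g := fun r s hrs => Real.sqrt_le_sqrt (by gcongr)
  calc wHS e ν A = ⨆ θ : ℝ, g (Complex.exp (↑(2 * θ) * Complex.I) * t).re :=
        iSup_congr fun θ => (Real.sqrt_sq (hsNorm_nonneg e _)).symm.trans
          (congrArg Real.sqrt (hsNorm_weightedPart_sq e hA hν₀ hν₁ θ))
    _ = ⨆ θ : ℝ, g (Complex.exp (θ * Complex.I) * t).re :=
        (mul_left_surjective₀ two_ne_zero).iSup_comp fun θ : ℝ =>
          g (Complex.exp (θ * Complex.I) * t).re
    _ = g ‖t‖ := hg.ciSup_comp_re_exp_mul_I_mul t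

theorem stmt12 {ι : Type*} (e : HilbertBasis ι ℂ H) (A : H →L[ℂ] H)
    (hA : Summable fun i => ‖A (e i)‖ ^ 2)
    (ν : ℝ) (hν₀ : 0 < ν) (hν₁ : ν < 1) :
    wHS e ν A = Real.sqrt (2 * ν ^ 2 - 2 * ν + 1) * hsNorm e A ↔
      trBasis e (A.comp A) = 0 := by
  have hc : 0 < 2 * ν * (1 - ν) := by nlinarith
  have hrhs : √(2 * ν ^ 2 - 2 * ν + 1) * hsNorm e A =
      √((ν ^ 2 + (1 - ν) ^ 2) * hsNorm e A ^ 2) := by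
    rw [Real.sqrt_mul' _ (sq_nonneg _), Real.sqrt_sq (hsNorm_nonneg e A)]
    congr 2
    ring
  rw [wHS_eq_sqrt e hA hν₀.le hν₁.le, hrhs,
    Real.sqrt_inj (add_nonneg (by positivity) (mul_nonneg hc.le (norm_nonneg _))) (by positivity),
    add_eq_left, mul_eq_zero, norm_eq_zero, or_iff_right hc.ne']
end

section
/- Let H be a complex Hilbert space, let A and B be self-adjoint Hilbert–Schmidt operators on H, and let 0 ≤ ν ≤ 1. Let T denote the block diagonal operator [[A, 0],[0, B]] on H ⊕ H. Then w_{(2,ν)}(T)² = w_{(2,ν)}(A)² + w_{(2,ν)}(B)². -/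
variable {H : Type*} [NormedAddCommGroup H] [InnerProductSpace ℂ H] [CompleteSpace H]

/-! For self-adjoint `A`, `ν e^{iθ} A + (1-ν) e^{-iθ} A*` is the multiple of `A` by
`ν e^{iθ} + (1-ν) e^{-iθ}`, a convex combination of two unimodular numbers which equals `1` at
`θ = 0`; hence `w_{(2,ν)}(A) = ‖A‖₂`. The block diagonal operator `T` is again self-adjoint, so it
remains to show `‖T‖₂² = ‖A‖₂² + ‖B‖₂²`. By Parseval and Tonelli, `∑ ‖T bᵢ‖² = ∑ ‖T* cⱼ‖²` for any
two Hilbert bases, so for self-adjoint `T` the sum does not depend on the basis, and in the basis of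
`H ⊕ H` assembled from `e` it visibly splits into the two sums for `A` and `B`. -/

open scoped ENNReal InnerProductSpace

theorem Summable.tsum_enorm_sq_ne_top {ι E : Type*} [NormedAddCommGroup E] {g : ι → E}
    (h : Summable fun i ↦ ‖g i‖ ^ 2) : ∑' i, ‖g i‖ₑ ^ 2 ≠ ∞ := by
  simpa [ENNReal.ofReal_pow, ofReal_norm] using h.tsum_ofReal_ne_top

section HilbertSchmidt

variable {𝕜 E F : Type*} [RCLike 𝕜] [NormedAddCommGroup E] [InnerProductSpace 𝕜 E]
  [NormedAddCommGroup F] [InnerProductSpace 𝕜 F] {ι κ : Type*}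

theorem HilbertBasis.tsum_enorm_inner_sq_s16 (b : HilbertBasis ι 𝕜 E) (x : E) :
    ∑' i, ‖⟪b i, x⟫_𝕜‖ₑ ^ 2 = ‖x‖ₑ ^ 2 := by
  have h := lp.hasSum_norm (p := 2) (by norm_num) (b.repr x)
  simp only [ENNReal.toReal_ofNat, Real.rpow_two, b.repr_apply_apply,
    LinearIsometryEquiv.norm_map] at h
  simp_rw [← ofReal_norm, ← ENNReal.ofReal_pow (norm_nonneg _)]
  exact (ENNReal.ofReal_tsum_of_nonneg (fun _ ↦ sq_nonneg _) h.summable).symm.trans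
    (congrArg _ h.tsum_eq)

theorem HilbertBasis.eq_zero_of_forall_inner_eq_zero (b : HilbertBasis ι 𝕜 E) {x : E}
    (hx : ∀ i, ⟪b i, x⟫_𝕜 = 0) : x = 0 :=
  b.repr.injective <| by ext i; simp [b.repr_apply_apply, hx]

theorem HilbertBasis.orthonormal_sumElim_toLp (b : HilbertBasis ι 𝕜 E)
    (c : HilbertBasis κ 𝕜 F) :
    Orthonormal 𝕜 (Sum.elim (fun i ↦ WithLp.toLp 2 (b i, (0 : F)))
      (fun j ↦ WithLp.toLp 2 ((0 : E), c j))) := by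
  classical
  rw [orthonormal_iff_ite]
  rintro (i | j) (i' | j') <;>
    simp [orthonormal_iff_ite.mp b.orthonormal, orthonormal_iff_ite.mp c.orthonormal]

theorem HilbertBasis.orthogonal_span_sumElim_toLp (b : HilbertBasis ι 𝕜 E)
    (c : HilbertBasis κ 𝕜 F) :
    (Submodule.span 𝕜 (Set.range (Sum.elim (fun i ↦ WithLp.toLp 2 (b i, (0 : F)))
      (fun j ↦ WithLp.toLp 2 ((0 : E), c j)))))ᗮ = ⊥ := by
  refine (Submodule.eq_bot_iff _).mpr fun z hz ↦ ?_
  have hz' (k) := (Submodule.mem_orthogonal _ _).mp hz _ (Submodule.subset_span ⟨k, rfl⟩)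
  have hfst : z.fst = 0 := b.eq_zero_of_forall_inner_eq_zero fun i ↦ by simpa using hz' (.inl i)
  have hsnd : z.snd = 0 := c.eq_zero_of_forall_inner_eq_zero fun j ↦ by simpa using hz' (.inr j)
  exact WithLp.ofLp_injective 2 (Prod.ext hfst hsnd)

variable [CompleteSpace E] [CompleteSpace F]

theorem tsum_enorm_apply_sq_eq_adjoint (b : HilbertBasis ι 𝕜 E) (c : HilbertBasis κ 𝕜 F)
    (T : E →L[𝕜] F) :
    ∑' i, ‖T (b i)‖ₑ ^ 2 = ∑' j, ‖T.adjoint (c j)‖ₑ ^ 2 := by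
  calc ∑' i, ‖T (b i)‖ₑ ^ 2 = ∑' i, ∑' j, ‖⟪c j, T (b i)⟫_𝕜‖ₑ ^ 2 := by
        simp_rw [c.tsum_enorm_inner_sq_s16]
    _ = ∑' j, ∑' i, ‖⟪b i, T.adjoint (c j)⟫_𝕜‖ₑ ^ 2 := by
        rw [ENNReal.tsum_comm]
        simp_rw [ContinuousLinearMap.adjoint_inner_right, ← ofReal_norm, norm_inner_symm]
    _ = ∑' j, ‖T.adjoint (c j)‖ₑ ^ 2 := by
        simp_rw [b.tsum_enorm_inner_sq_s16]

protected noncomputable def HilbertBasis.prod (b : HilbertBasis ι 𝕜 E)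
    (c : HilbertBasis κ 𝕜 F) :
    HilbertBasis (ι ⊕ κ) 𝕜 (WithLp 2 (E × F)) :=
  .mkOfOrthogonalEqBot (b.orthonormal_sumElim_toLp c) (b.orthogonal_span_sumElim_toLp c)

@[simp]
theorem HilbertBasis.prod_apply_inl (b : HilbertBasis ι 𝕜 E) (c : HilbertBasis κ 𝕜 F) (i : ι) :
    b.prod c (.inl i) = WithLp.toLp 2 (b i, 0) := by
  simp [HilbertBasis.prod]

@[simp]
theorem HilbertBasis.prod_apply_inr (b : HilbertBasis ι 𝕜 E) (c : HilbertBasis κ 𝕜 F) (j : κ) :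
    b.prod c (.inr j) = WithLp.toLp 2 (0, c j) := by
  simp [HilbertBasis.prod]

end HilbertSchmidt

section WeightedRadius

variable {E : Type*} [NormedAddCommGroup E] [InnerProductSpace ℂ E] {ι : Type*}

-- Also when the series diverges: then the real `tsum` is `0` and so is `(∞).toReal`.
theorem hsNorm_sq (e : HilbertBasis ι ℂ E) (A : E →L[ℂ] E) :
    hsNorm e A ^ 2 = (∑' i, ‖A (e i)‖ₑ ^ 2).toReal := by
  rw [hsNorm, Real.sq_sqrt (tsum_nonneg fun _ ↦ sq_nonneg _),
    ENNReal.tsum_toReal_eq fun _ ↦ by finiteness]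
  simp

theorem hsNorm_smul (e : HilbertBasis ι ℂ E) (c : ℂ) (A : E →L[ℂ] E) :
    hsNorm e (c • A) = ‖c‖ * hsNorm e A := by
  simp_rw [hsNorm, smul_apply, norm_smul, mul_pow, tsum_mul_left]
  rw [Real.sqrt_mul (sq_nonneg _), Real.sqrt_sq (norm_nonneg _)]

theorem weightedPart_of_isSelfAdjoint [CompleteSpace E] (ν θ : ℝ) {A : E →L[ℂ] E}
    (hA : IsSelfAdjoint A) :
    weightedPart ν θ A =
      ((ν : ℂ) * Complex.exp (θ * Complex.I) +
        ((1 - ν : ℝ) : ℂ) * Complex.exp (-(θ * Complex.I))) • A := by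
  rw [weightedPart, ContinuousLinearMap.isSelfAdjoint_iff'.mp hA, add_smul]

theorem norm_convex_exp_add_exp_le_one {ν : ℝ} (hν₀ : 0 ≤ ν) (hν₁ : ν ≤ 1) (θ : ℝ) :
    ‖(ν : ℂ) * Complex.exp (θ * Complex.I) +
      ((1 - ν : ℝ) : ℂ) * Complex.exp (-(θ * Complex.I))‖ ≤ 1 := by
  have hneg : -((θ : ℂ) * Complex.I) = ((-θ : ℝ) : ℂ) * Complex.I := by push_cast; ring
  calc _ ≤ ‖(ν : ℂ) * Complex.exp (θ * Complex.I)‖ +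
        ‖((1 - ν : ℝ) : ℂ) * Complex.exp (-(θ * Complex.I))‖ := norm_add_le _ _
    _ = ν + (1 - ν) := by
      rw [hneg, norm_mul, norm_mul, Complex.norm_exp_ofReal_mul_I,
        Complex.norm_exp_ofReal_mul_I, Complex.norm_real, Complex.norm_real,
        Real.norm_of_nonneg hν₀, Real.norm_of_nonneg (by linarith), mul_one, mul_one]
    _ = 1 := by ring

theorem wHS_of_isSelfAdjoint [CompleteSpace E] (e : HilbertBasis ι ℂ E) {ν : ℝ} (hν₀ : 0 ≤ ν)
    (hν₁ : ν ≤ 1) {A : E →L[ℂ] E} (hA : IsSelfAdjoint A) : wHS e ν A = hsNorm e A := by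
  have hle (θ : ℝ) : hsNorm e (weightedPart ν θ A) ≤ hsNorm e A := by
    rw [weightedPart_of_isSelfAdjoint ν θ hA, hsNorm_smul]
    exact mul_le_of_le_one_left (Real.sqrt_nonneg _) (norm_convex_exp_add_exp_le_one hν₀ hν₁ θ)
  have hzero : hsNorm e (weightedPart ν 0 A) = hsNorm e A := by
    simp [weightedPart_of_isSelfAdjoint ν 0 hA]
  refine le_antisymm (ciSup_le hle) ?_
  exact hzero ▸ le_ciSup ⟨hsNorm e A, Set.forall_mem_range.mpr hle⟩ 0

end WeightedRadius

omit [CompleteSpace H] in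
theorem blockOp_apply (X Y Z W : H →L[ℂ] H) (z : WithLp 2 (H × H)) :
    blockOp X Y Z W z = WithLp.toLp 2 (X z.fst + Y z.snd, Z z.fst + W z.snd) := rfl

theorem adjoint_blockOp (X Y Z W : H →L[ℂ] H) :
    (blockOp X Y Z W).adjoint = blockOp X.adjoint Z.adjoint Y.adjoint W.adjoint := by
  refine ((ContinuousLinearMap.eq_adjoint_iff _ _).mpr fun x y ↦ ?_).symm
  simp only [blockOp_apply, WithLp.prod_inner_apply, WithLp.ofLp_fst, WithLp.ofLp_snd,
    inner_add_left, inner_add_right, ContinuousLinearMap.adjoint_inner_left]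
  ring

theorem tsum_enorm_blockOp_diag_prod_sq {ι : Type*} (e : HilbertBasis ι ℂ H) (A B : H →L[ℂ] H) :
    ∑' k, ‖blockOp A 0 0 B (e.prod e k)‖ₑ ^ 2 =
      ∑' i, ‖A (e i)‖ₑ ^ 2 + ∑' i, ‖B (e i)‖ₑ ^ 2 := by
  rw [ENNReal.summable.tsum_sum ENNReal.summable]
  simp [blockOp_apply, enorm_eq_nnnorm]

theorem stmt16 {ι κ : Type*} (e : HilbertBasis ι ℂ H)
    (f : HilbertBasis κ ℂ (WithLp 2 (H × H)))
    (A B : H →L[ℂ] H)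
    (hA_sa : ContinuousLinearMap.adjoint A = A) (hB_sa : ContinuousLinearMap.adjoint B = B)
    (hA : Summable fun i => ‖A (e i)‖ ^ 2) (hB : Summable fun i => ‖B (e i)‖ ^ 2)
    (ν : ℝ) (hν₀ : 0 ≤ ν) (hν₁ : ν ≤ 1) :
    (wHS f ν (blockOp A 0 0 B)) ^ 2 = (wHS e ν A) ^ 2 + (wHS e ν B) ^ 2 := by
  have hA' : IsSelfAdjoint A := ContinuousLinearMap.isSelfAdjoint_iff'.mpr hA_sa
  have hB' : IsSelfAdjoint B := ContinuousLinearMap.isSelfAdjoint_iff'.mpr hB_sa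
  have hT : IsSelfAdjoint (blockOp A 0 0 B) :=
    ContinuousLinearMap.isSelfAdjoint_iff'.mpr (by simp [adjoint_blockOp, hA_sa, hB_sa])
  rw [wHS_of_isSelfAdjoint f hν₀ hν₁ hT,
    wHS_of_isSelfAdjoint e hν₀ hν₁ hA', wHS_of_isSelfAdjoint e hν₀ hν₁ hB', hsNorm_sq, hsNorm_sq,
    hsNorm_sq, tsum_enorm_apply_sq_eq_adjoint f (e.prod e), hT.adjoint_eq,
    tsum_enorm_blockOp_diag_prod_sq,
    ENNReal.toReal_add hA.tsum_enorm_sq_ne_top hB.tsum_enorm_sq_ne_top]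
end

section
/- Let H be a complex Hilbert space, let A and B be Hilbert–Schmidt operators on H, and let 0 ≤ ν ≤ 1. Let T denote the block operator [[0, A],[B*, 0]] on H ⊕ H. Then ‖A + B‖₂ ≤ √(2 w_{(2,ν)}(T)² - (1 - 2ν)² ‖A - B‖₂²) ≤ ‖A‖₂ + ‖B‖₂. -/
variable {H : Type*} [NormedAddCommGroup H] [InnerProductSpace ℂ H] [CompleteSpace H]

/-!
For `T = [[0, A], [B*, 0]]`, the operator `ν e^{iθ} T + (1-ν) e^{-iθ} T*` is again off-diagonal,
`[[0, U], [V*, 0]]` with `U = ν X + (1-ν) Y`, `V = ν Y + (1-ν) X`, `X = e^{iθ} A`, `Y = e^{-iθ} B`.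
The parallelogram law for `U ± V` gives
`‖U‖₂² + ‖V‖₂² = 2ν(1-ν) ‖X + Y‖₂² + (1-2ν)² (‖A‖₂² + ‖B‖₂²)`,
so `w_{(2,ν)}(T)²` is the supremum over `θ` of this expression. Taking `θ = 0` bounds it below, and
`‖X + Y‖₂ ≤ ‖A‖₂ + ‖B‖₂` bounds it above. The parallelogram law
`‖A + B‖₂² + ‖A - B‖₂² = 2 (‖A‖₂² + ‖B‖₂²)` and `4ν(1-ν) + (1-2ν)² = 1` then turn these two bounds
into the two inequalities.
-/

open scoped ENNReal InnerProductSpace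
open ContinuousLinearMap

section HilbertSchmidt

variable {E F G : Type*} [NormedAddCommGroup E] [InnerProductSpace ℂ E]
  [NormedAddCommGroup F] [InnerProductSpace ℂ F] [NormedAddCommGroup G] [InnerProductSpace ℂ G]
  {ι κ : Type*}

-- Valued in `ℝ≥0∞` so that sums can be exchanged without summability hypotheses; it is `∞`
-- exactly when `S` is not Hilbert–Schmidt, where `hsNorm` takes the junk value `0`.
noncomputable def hsNormSq (b : HilbertBasis ι ℂ E) (S : E →L[ℂ] F) : ℝ≥0∞ :=
  ∑' i, ENNReal.ofReal (‖S (b i)‖ ^ 2)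

theorem HilbertBasis.hasSum_norm_inner_sq_s19 (b : HilbertBasis ι ℂ E) (x : E) :
    HasSum (fun i => ‖⟪b i, x⟫_ℂ‖ ^ 2) (‖x‖ ^ 2) := by
  simpa [b.repr.norm_map, HilbertBasis.repr_apply_apply] using
    lp.hasSum_norm (p := 2) (by norm_num) (b.repr x)

theorem HilbertBasis.ofReal_norm_sq_eq_tsum (b : HilbertBasis ι ℂ E) (x : E) :
    ENNReal.ofReal (‖x‖ ^ 2) = ∑' i, ENNReal.ofReal (‖⟪b i, x⟫_ℂ‖ ^ 2) := by
  rw [← (b.hasSum_norm_inner_sq_s19 x).tsum_eq,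
    ENNReal.ofReal_tsum_of_nonneg (fun _ => sq_nonneg _) (b.hasSum_norm_inner_sq_s19 x).summable]

theorem hsNorm_eq_sqrt_toReal (b : HilbertBasis ι ℂ E) (S : E →L[ℂ] E) :
    hsNorm b S = √(hsNormSq b S).toReal := by
  rw [hsNorm, hsNormSq, ENNReal.tsum_toReal_eq fun _ => ENNReal.ofReal_ne_top]
  simp only [ENNReal.toReal_ofReal (sq_nonneg _)]

theorem hsNorm_sq_eq_toReal (b : HilbertBasis ι ℂ E) (S : E →L[ℂ] E) :
    hsNorm b S ^ 2 = (hsNormSq b S).toReal := by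
  rw [hsNorm_eq_sqrt_toReal, Real.sq_sqrt ENNReal.toReal_nonneg]

theorem summable_of_hsNormSq_ne_top {b : HilbertBasis ι ℂ E} {S : E →L[ℂ] F}
    (hS : hsNormSq b S ≠ ∞) : Summable fun i => ‖S (b i)‖ ^ 2 := by
  simpa only [ENNReal.toReal_ofReal (sq_nonneg _)] using ENNReal.summable_toReal hS

theorem hsNormSq_adjoint [CompleteSpace E] [CompleteSpace F] (b : HilbertBasis ι ℂ E)
    (c : HilbertBasis κ ℂ F) (S : E →L[ℂ] F) : hsNormSq c (adjoint S) = hsNormSq b S := by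
  simp only [hsNormSq, c.ofReal_norm_sq_eq_tsum (S (b _)),
    b.ofReal_norm_sq_eq_tsum (adjoint S (c _))]
  rw [ENNReal.tsum_comm]
  refine tsum_congr fun i => tsum_congr fun j => ?_
  rw [norm_inner_symm, adjoint_inner_left]

theorem WithLp.norm_adjoint_fstL_apply [CompleteSpace E] [CompleteSpace F] (x : E) :
    ‖adjoint (WithLp.fstL 2 ℂ E F) x‖ = ‖x‖ := by
  have : adjoint (WithLp.fstL 2 ℂ E F) x = WithLp.toLp 2 (x, (0 : F)) :=
    ext_inner_right ℂ fun v => by simp [adjoint_inner_left]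
  rw [this, WithLp.norm_toLp_fst]

theorem WithLp.norm_adjoint_sndL_apply [CompleteSpace E] [CompleteSpace F] (y : F) :
    ‖adjoint (WithLp.sndL 2 ℂ E F) y‖ = ‖y‖ := by
  have : adjoint (WithLp.sndL 2 ℂ E F) y = WithLp.toLp 2 ((0 : E), y) :=
    ext_inner_right ℂ fun v => by simp [adjoint_inner_left]
  rw [this, WithLp.norm_toLp_snd]

theorem hsNormSq_comp_of_norm_adjoint_apply [CompleteSpace E] [CompleteSpace F]
    [CompleteSpace G] (b : HilbertBasis ι ℂ G) (c : HilbertBasis κ ℂ E) {V : G →L[ℂ] E}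
    (hV : ∀ x, ‖adjoint V x‖ = ‖x‖) (Y : E →L[ℂ] F) : hsNormSq b (Y ∘L V) = hsNormSq c Y := by
  obtain ⟨w, d, -⟩ := exists_hilbertBasis ℂ F
  rw [← hsNormSq_adjoint b d, adjoint_comp, ← hsNormSq_adjoint c d]
  simp only [hsNormSq, comp_apply, hV]

theorem hsNormSq_smul (b : HilbertBasis ι ℂ E) (c : ℂ) (S : E →L[ℂ] F) :
    hsNormSq b (c • S) = ENNReal.ofReal (‖c‖ ^ 2) * hsNormSq b S := by
  simp only [hsNormSq, ← ENNReal.tsum_mul_left, smul_apply, norm_smul, mul_pow,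
    ENNReal.ofReal_mul (sq_nonneg _)]

theorem hsNormSq_exp_smul (b : HilbertBasis ι ℂ E) {z : ℂ} (hz : z.re = 0) (S : E →L[ℂ] F) :
    hsNormSq b (Complex.exp z • S) = hsNormSq b S := by
  simp [hsNormSq_smul, Complex.norm_exp, hz]

theorem hsNorm_exp_smul (b : HilbertBasis ι ℂ E) {z : ℂ} (hz : z.re = 0) (S : E →L[ℂ] E) :
    hsNorm b (Complex.exp z • S) = hsNorm b S := by
  rw [hsNorm_eq_sqrt_toReal, hsNormSq_exp_smul b hz, ← hsNorm_eq_sqrt_toReal]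

theorem hsNormSq_add_add_hsNormSq_sub (b : HilbertBasis ι ℂ E) (S T : E →L[ℂ] F) :
    hsNormSq b (S + T) + hsNormSq b (S - T) = 2 * (hsNormSq b S + hsNormSq b T) := by
  simp only [hsNormSq, ← ENNReal.tsum_add, ← ENNReal.tsum_mul_left]
  refine tsum_congr fun i => ?_
  rw [← ENNReal.ofReal_add (sq_nonneg _) (sq_nonneg _),
    ← ENNReal.ofReal_add (sq_nonneg _) (sq_nonneg _), ← ENNReal.ofReal_ofNat 2,
    ← ENNReal.ofReal_mul zero_le_two, add_apply, sub_apply]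
  congr 1
  linear_combination parallelogram_law_with_norm ℂ (S (b i)) (T (b i))

theorem hsNormSq_add_ne_top {b : HilbertBasis ι ℂ E} {S T : E →L[ℂ] F} (hS : hsNormSq b S ≠ ∞)
    (hT : hsNormSq b T ≠ ∞) : hsNormSq b (S + T) ≠ ∞ :=
  ne_top_of_le_ne_top (by finiteness) (le_self_add.trans_eq (hsNormSq_add_add_hsNormSq_sub b S T))

theorem hsNormSq_sub_ne_top {b : HilbertBasis ι ℂ E} {S T : E →L[ℂ] F} (hS : hsNormSq b S ≠ ∞)
    (hT : hsNormSq b T ≠ ∞) : hsNormSq b (S - T) ≠ ∞ :=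
  ne_top_of_le_ne_top (by finiteness) (le_add_self.trans_eq (hsNormSq_add_add_hsNormSq_sub b S T))

theorem hsNorm_nonneg_s19 (b : HilbertBasis ι ℂ E) (S : E →L[ℂ] E) : 0 ≤ hsNorm b S :=
  Real.sqrt_nonneg _

theorem hsNorm_add_sq_add_hsNorm_sub_sq {b : HilbertBasis ι ℂ E} {S T : E →L[ℂ] E}
    (hS : hsNormSq b S ≠ ∞) (hT : hsNormSq b T ≠ ∞) :
    hsNorm b (S + T) ^ 2 + hsNorm b (S - T) ^ 2 = 2 * (hsNorm b S ^ 2 + hsNorm b T ^ 2) := by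
  simp only [hsNorm_sq_eq_toReal]
  rw [← ENNReal.toReal_add (hsNormSq_add_ne_top hS hT) (hsNormSq_sub_ne_top hS hT),
    hsNormSq_add_add_hsNormSq_sub, ENNReal.toReal_mul, ENNReal.toReal_add hS hT]
  rfl

theorem hsNorm_add_le {b : HilbertBasis ι ℂ E} {S T : E →L[ℂ] E} (hS : hsNormSq b S ≠ ∞)
    (hT : hsNormSq b T ≠ ∞) : hsNorm b (S + T) ≤ hsNorm b S + hsNorm b T := by
  have mem {U : E →L[ℂ] E} (hU : hsNormSq b U ≠ ∞) : Memℓp (fun i => U (b i)) 2 :=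
    memℓp_gen (by simpa using summable_of_hsNormSq_ne_top hU)
  have norm_eq (x : lp (fun _ : ι => E) 2) : ‖x‖ = √(∑' i, ‖x i‖ ^ 2) := by
    rw [lp.norm_eq_tsum_rpow (by norm_num), Real.sqrt_eq_rpow]
    norm_num
  simpa only [norm_eq, hsNorm, lp.coeFn_add, Pi.add_apply, add_apply] using
    norm_add_le (⟨_, mem hS⟩ : lp (fun _ : ι => E) 2) ⟨_, mem hT⟩

theorem norm_sq_add_norm_sq_convex_swap (ν : ℝ) (x y : E) :
    ‖(ν : ℂ) • x + ((1 - ν : ℝ) : ℂ) • y‖ ^ 2 + ‖(ν : ℂ) • y + ((1 - ν : ℝ) : ℂ) • x‖ ^ 2 =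
      2 * ν * (1 - ν) * ‖x + y‖ ^ 2 + (1 - 2 * ν) ^ 2 * (‖x‖ ^ 2 + ‖y‖ ^ 2) := by
  have hsum : (ν : ℂ) • x + ((1 - ν : ℝ) : ℂ) • y + ((ν : ℂ) • y + ((1 - ν : ℝ) : ℂ) • x) =
      x + y := by
    push_cast; module
  have hdiff : (ν : ℂ) • x + ((1 - ν : ℝ) : ℂ) • y - ((ν : ℂ) • y + ((1 - ν : ℝ) : ℂ) • x) =
      ((2 * ν - 1 : ℝ) : ℂ) • (x - y) := by
    push_cast; module
  have h := parallelogram_law_with_norm ℂ ((ν : ℂ) • x + ((1 - ν : ℝ) : ℂ) • y)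
    ((ν : ℂ) • y + ((1 - ν : ℝ) : ℂ) • x)
  rw [hsum, hdiff, norm_smul, Complex.norm_real, Real.norm_eq_abs, mul_pow, sq_abs] at h
  linear_combination (-1 / 2 : ℝ) * h + (1 - 2 * ν) ^ 2 / 2 * parallelogram_law_with_norm ℂ x y

theorem hsNormSq_convex_swap (b : HilbertBasis ι ℂ E) {ν : ℝ} (hν₀ : 0 ≤ ν) (hν₁ : ν ≤ 1)
    (X Y : E →L[ℂ] F) :
    hsNormSq b ((ν : ℂ) • X + ((1 - ν : ℝ) : ℂ) • Y) +
        hsNormSq b ((ν : ℂ) • Y + ((1 - ν : ℝ) : ℂ) • X) =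
      ENNReal.ofReal (2 * ν * (1 - ν)) * hsNormSq b (X + Y) +
        ENNReal.ofReal ((1 - 2 * ν) ^ 2) * (hsNormSq b X + hsNormSq b Y) := by
  have hp : 0 ≤ 2 * ν * (1 - ν) := by nlinarith
  simp only [hsNormSq, ← ENNReal.tsum_add, ← ENNReal.tsum_mul_left]
  refine tsum_congr fun i => ?_
  rw [← ENNReal.ofReal_add (sq_nonneg _) (sq_nonneg _),
    ← ENNReal.ofReal_add (sq_nonneg _) (sq_nonneg _), ← ENNReal.ofReal_mul hp,
    ← ENNReal.ofReal_mul (sq_nonneg _),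
    ← ENNReal.ofReal_add (by positivity) (by positivity)]
  simp only [add_apply, smul_apply]
  rw [norm_sq_add_norm_sq_convex_swap]

end HilbertSchmidt

section BlockOperators

variable {E : Type*} [NormedAddCommGroup E] [InnerProductSpace ℂ E] {ι κ : Type*}

-- `weightedPart ν θ A` is `weightedSum ν θ A (adjoint A)`.
noncomputable def weightedSum (ν θ : ℝ) (A B : E →L[ℂ] E) : E →L[ℂ] E :=
  ((ν : ℂ) * Complex.exp (θ * Complex.I)) • A +
    (((1 - ν : ℝ) : ℂ) * Complex.exp (-(θ * Complex.I))) • B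

theorem weightedSum_eq (ν θ : ℝ) (A B : E →L[ℂ] E) :
    weightedSum ν θ A B = (ν : ℂ) • (Complex.exp (θ * Complex.I) • A) +
      ((1 - ν : ℝ) : ℂ) • (Complex.exp (-(θ * Complex.I)) • B) := by
  simp only [weightedSum, mul_smul]

theorem adjoint_weightedSum [CompleteSpace E] (ν θ : ℝ) (A B : E →L[ℂ] E) :
    adjoint (weightedSum ν θ A B) = weightedSum ν (-θ) (adjoint A) (adjoint B) := by
  simp only [weightedSum, map_add, LinearIsometryEquiv.map_smulₛₗ, map_mul,
    Complex.conj_ofReal, ← Complex.exp_conj, map_neg, Complex.conj_I, Complex.ofReal_neg,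
    neg_mul, mul_neg, neg_neg]

@[simp] theorem blockOp_apply_fst (X Y Z W : E →L[ℂ] E) (v : WithLp 2 (E × E)) :
    (blockOp X Y Z W v).fst = X v.fst + Y v.snd := rfl

@[simp] theorem blockOp_apply_snd (X Y Z W : E →L[ℂ] E) (v : WithLp 2 (E × E)) :
    (blockOp X Y Z W v).snd = Z v.fst + W v.snd := rfl

theorem adjoint_blockOp_s19 [CompleteSpace E] (Y Z : E →L[ℂ] E) :
    adjoint (blockOp 0 Y Z 0) = blockOp 0 (adjoint Z) (adjoint Y) 0 := by
  refine ((eq_adjoint_iff _ _).2 fun x y => ?_).symm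
  simp only [WithLp.prod_inner_apply, WithLp.ofLp_fst, WithLp.ofLp_snd, blockOp_apply_fst,
    blockOp_apply_snd, zero_apply, zero_add, add_zero, adjoint_inner_left]
  ring

theorem smul_blockOp_add_smul_blockOp (c d : ℂ) (Y Z Y' Z' : E →L[ℂ] E) :
    c • blockOp 0 Y Z 0 + d • blockOp 0 Y' Z' 0 =
      blockOp 0 (c • Y + d • Y') (c • Z + d • Z') 0 := by
  ext v : 1
  refine WithLp.ofLp_injective 2 (Prod.ext ?_ ?_) <;> simp

theorem weightedPart_blockOp [CompleteSpace E] (ν θ : ℝ) (A B : E →L[ℂ] E) :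
    weightedPart ν θ (blockOp 0 A (adjoint B) 0) =
      blockOp 0 (weightedSum ν θ A B) (adjoint (weightedSum ν (-θ) B A)) 0 := by
  rw [adjoint_weightedSum, neg_neg, weightedPart, adjoint_blockOp_s19, adjoint_adjoint,
    smul_blockOp_add_smul_blockOp]
  rfl

theorem hsNormSq_blockOp [CompleteSpace E] (e : HilbertBasis ι ℂ E)
    (f : HilbertBasis κ ℂ (WithLp 2 (E × E))) (Y Z : E →L[ℂ] E) :
    hsNormSq f (blockOp 0 Y Z 0) = hsNormSq e Y + hsNormSq e Z := by
  have hsplit : hsNormSq f (blockOp 0 Y Z 0) =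
      hsNormSq f (Y ∘L WithLp.sndL 2 ℂ E E) + hsNormSq f (Z ∘L WithLp.fstL 2 ℂ E E) := by
    simp only [hsNormSq, ← ENNReal.tsum_add]
    refine tsum_congr fun j => ?_
    rw [← ENNReal.ofReal_add (sq_nonneg _) (sq_nonneg _), WithLp.prod_norm_sq_eq_of_L2]
    simp
  rw [hsplit, hsNormSq_comp_of_norm_adjoint_apply f e WithLp.norm_adjoint_sndL_apply,
    hsNormSq_comp_of_norm_adjoint_apply f e WithLp.norm_adjoint_fstL_apply]

theorem hsNormSq_weightedPart_blockOp [CompleteSpace E] (e : HilbertBasis ι ℂ E)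
    (f : HilbertBasis κ ℂ (WithLp 2 (E × E))) {ν : ℝ} (hν₀ : 0 ≤ ν) (hν₁ : ν ≤ 1) (θ : ℝ)
    (A B : E →L[ℂ] E) :
    hsNormSq f (weightedPart ν θ (blockOp 0 A (adjoint B) 0)) =
      ENNReal.ofReal (2 * ν * (1 - ν)) *
          hsNormSq e (Complex.exp (θ * Complex.I) • A + Complex.exp (-(θ * Complex.I)) • B) +
        ENNReal.ofReal ((1 - 2 * ν) ^ 2) * (hsNormSq e A + hsNormSq e B) := by
  have hswap : weightedSum ν (-θ) B A = (ν : ℂ) • (Complex.exp (-(θ * Complex.I)) • B) +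
      ((1 - ν : ℝ) : ℂ) • (Complex.exp (θ * Complex.I) • A) := by
    simp only [weightedSum_eq, Complex.ofReal_neg, neg_mul, neg_neg]
  rw [weightedPart_blockOp, hsNormSq_blockOp e f, hsNormSq_adjoint e e, hswap, weightedSum_eq,
    hsNormSq_convex_swap e hν₀ hν₁, hsNormSq_exp_smul e (by simp), hsNormSq_exp_smul e (by simp)]

theorem hsNorm_weightedPart_blockOp_sq [CompleteSpace E] (e : HilbertBasis ι ℂ E)
    (f : HilbertBasis κ ℂ (WithLp 2 (E × E))) {A B : E →L[ℂ] E} (hA : hsNormSq e A ≠ ∞)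
    (hB : hsNormSq e B ≠ ∞) {ν : ℝ} (hν₀ : 0 ≤ ν) (hν₁ : ν ≤ 1) (θ : ℝ) :
    hsNorm f (weightedPart ν θ (blockOp 0 A (adjoint B) 0)) ^ 2 =
      2 * ν * (1 - ν) *
          hsNorm e (Complex.exp (θ * Complex.I) • A + Complex.exp (-(θ * Complex.I)) • B) ^ 2 +
        (1 - 2 * ν) ^ 2 * (hsNorm e A ^ 2 + hsNorm e B ^ 2) := by
  have hsum : hsNormSq e (Complex.exp (θ * Complex.I) • A + Complex.exp (-(θ * Complex.I)) • B)
      ≠ ∞ :=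
    hsNormSq_add_ne_top (by rwa [hsNormSq_exp_smul e (by simp)])
      (by rwa [hsNormSq_exp_smul e (by simp)])
  simp only [hsNorm_sq_eq_toReal]
  rw [hsNormSq_weightedPart_blockOp e f hν₀ hν₁,
    ENNReal.toReal_add (by finiteness) (by finiteness), ENNReal.toReal_mul, ENNReal.toReal_mul,
    ENNReal.toReal_ofReal (by nlinarith), ENNReal.toReal_ofReal (sq_nonneg _),
    ENNReal.toReal_add hA hB]

theorem wHS_blockOp_sq_bounds [CompleteSpace E] (e : HilbertBasis ι ℂ E)
    (f : HilbertBasis κ ℂ (WithLp 2 (E × E))) {A B : E →L[ℂ] E} (hA : hsNormSq e A ≠ ∞)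
    (hB : hsNormSq e B ≠ ∞) {ν : ℝ} (hν₀ : 0 ≤ ν) (hν₁ : ν ≤ 1) :
    2 * ν * (1 - ν) * hsNorm e (A + B) ^ 2 + (1 - 2 * ν) ^ 2 * (hsNorm e A ^ 2 + hsNorm e B ^ 2)
        ≤ wHS f ν (blockOp 0 A (adjoint B) 0) ^ 2 ∧
      wHS f ν (blockOp 0 A (adjoint B) 0) ^ 2 ≤
        2 * ν * (1 - ν) * (hsNorm e A + hsNorm e B) ^ 2 +
          (1 - 2 * ν) ^ 2 * (hsNorm e A ^ 2 + hsNorm e B ^ 2) := by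
  have hrot (θ : ℝ) :
      hsNorm e (Complex.exp (θ * Complex.I) • A + Complex.exp (-(θ * Complex.I)) • B) ≤
        hsNorm e A + hsNorm e B := by
    refine (hsNorm_add_le ?_ ?_).trans_eq ?_
    · rwa [hsNormSq_exp_smul e (by simp)]
    · rwa [hsNormSq_exp_smul e (by simp)]
    · rw [hsNorm_exp_smul e (by simp), hsNorm_exp_smul e (by simp)]
  have hle (θ : ℝ) : hsNorm f (weightedPart ν θ (blockOp 0 A (adjoint B) 0)) ≤
      √(2 * ν * (1 - ν) * (hsNorm e A + hsNorm e B) ^ 2 +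
          (1 - 2 * ν) ^ 2 * (hsNorm e A ^ 2 + hsNorm e B ^ 2)) := by
    refine Real.le_sqrt_of_sq_le ?_
    rw [hsNorm_weightedPart_blockOp_sq e f hA hB hν₀ hν₁]
    gcongr
    exacts [hsNorm_nonneg_s19 _ _, hrot θ]
  constructor
  · have h0 := hsNorm_weightedPart_blockOp_sq e f hA hB hν₀ hν₁ 0
    simp only [Complex.ofReal_zero, zero_mul, neg_zero, Complex.exp_zero, one_smul] at h0
    rw [← h0]
    exact pow_le_pow_left₀ (hsNorm_nonneg_s19 _ _) (le_ciSup ⟨_, Set.forall_mem_range.2 hle⟩ 0) 2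
  · exact (Real.le_sqrt (Real.iSup_nonneg fun _ => hsNorm_nonneg_s19 _ _) (by positivity)).1
      (ciSup_le hle)

end BlockOperators

theorem stmt19 {ι κ : Type*} (e : HilbertBasis ι ℂ H)
    (f : HilbertBasis κ ℂ (WithLp 2 (H × H)))
    (A B : H →L[ℂ] H)
    (hA : Summable fun i => ‖A (e i)‖ ^ 2) (hB : Summable fun i => ‖B (e i)‖ ^ 2)
    (ν : ℝ) (hν₀ : 0 ≤ ν) (hν₁ : ν ≤ 1) :
    hsNorm e (A + B) ≤
        Real.sqrt (2 * (wHS f ν (blockOp 0 A (ContinuousLinearMap.adjoint B) 0)) ^ 2 -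
          (1 - 2 * ν) ^ 2 * (hsNorm e (A - B)) ^ 2) ∧
      Real.sqrt (2 * (wHS f ν (blockOp 0 A (ContinuousLinearMap.adjoint B) 0)) ^ 2 -
          (1 - 2 * ν) ^ 2 * (hsNorm e (A - B)) ^ 2) ≤ hsNorm e A + hsNorm e B := by
  have hA' : hsNormSq e A ≠ ∞ := hA.tsum_ofReal_ne_top
  have hB' : hsNormSq e B ≠ ∞ := hB.tsum_ofReal_ne_top
  obtain ⟨hlow, hup⟩ := wHS_blockOp_sq_bounds e f hA' hB' hν₀ hν₁
  have hpar := hsNorm_add_sq_add_hsNorm_sub_sq hA' hB'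
  have htri := hsNorm_add_le hA' hB'
  have hs := hsNorm_nonneg_s19 e (A + B)
  have ha := hsNorm_nonneg_s19 e A
  have hb := hsNorm_nonneg_s19 e B
  constructor
  · exact Real.le_sqrt_of_sq_le (by nlinarith)
  · have hq : (1 - 2 * ν) ^ 2 * hsNorm e (A + B) ^ 2 ≤
        (1 - 2 * ν) ^ 2 * (hsNorm e A + hsNorm e B) ^ 2 := by gcongr
    exact Real.sqrt_le_iff.2 ⟨by positivity, by nlinarith⟩
end
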